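/- arXiv:2605.17982 — 5 statements merged into one kernel-verified Lean document; each statement's English description precedes it below -/
import Mathlib

section
/- Let G=(V,E) be a finite simple graph with attack A and S ⊆ A a Hall violator (|{i ∈ N[S] : x_i = 1}| < |S| for a given x ∈ {0,1}^V). If additionally N[j] ⊄ N[S] for every j ∈ A∖S, then the ray (α,β) with α_j = 1 on S, β_i = −1 on N[S] and zero elsewhere is an extreme point of the dual feasible region intersected with the L∞-ball {‖(α,β)‖_∞ ≤ 1}: it cannot be written as a proper convex combination of two distinct feasible points in that region. -/
open Finset

variable {V : Type*}

/-- The closed neighborhood of a vertex. -/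
def closedNbhd [Fintype V] [DecidableEq V] (G : SimpleGraph V) [DecidableRel G.Adj]
    (v : V) : Finset V :=
  insert v (G.neighborFinset v)

/-- The closed neighborhood of a set of vertices. -/
def closedNbhdSet [Fintype V] [DecidableEq V] (G : SimpleGraph V) [DecidableRel G.Adj]
    (S : Finset V) : Finset V :=
  S.biUnion (closedNbhd G)

/-- `D` counters the attack `A`: there is an injective assignment of distinct
defenders in `D` to attacked vertices, each defender in the closed neighborhood
of the vertex it defends. -/
def Counters [Fintype V] [DecidableEq V] (G : SimpleGraph V) [DecidableRel G.Adj]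
    (D A : Finset V) : Prop :=
  ∃ f : V → V, Set.InjOn f ↑A ∧ ∀ a ∈ A, f a ∈ D ∧ f a ∈ closedNbhd G a

lemma convex_eq_of_le {lam b c m : ℝ} (h0 : 0 < lam) (h1 : lam < 1)
    (hb : b ≤ m) (hc : c ≤ m) (h : m = lam * b + (1 - lam) * c) :
    b = m ∧ c = m := by
  constructor <;> nlinarith

/-- Under the additional condition `N[j] ⊄ N[S]` for every `j ∈ A \ S`, the
constructed ray `(α, β)` is an extreme point of the dual feasible region
intersected with the `L∞` unit ball: it is not a proper convex combination of
two distinct feasible points. -/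
theorem ray_extreme [Fintype V] [DecidableEq V] (G : SimpleGraph V)
    [DecidableRel G.Adj] (x : V → ℤ) (hx : ∀ i, x i = 0 ∨ x i = 1)
    (A S : Finset V) (hSA : S ⊆ A)
    (hviol : ((closedNbhdSet G S).filter (fun i => x i = 1)).card < S.card)
    (hext : ∀ j ∈ A \ S, ¬ closedNbhd G j ⊆ closedNbhdSet G S)
    (α β α₁ β₁ α₂ β₂ : V → ℝ)
    (hα : ∀ j, α j = if j ∈ S then 1 else 0)
    (hβ : ∀ i, β i = if i ∈ closedNbhdSet G S then -1 else 0)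
    (hfeas₁ : (∀ j ∈ A, ∀ i ∈ closedNbhd G j, α₁ j + β₁ i ≤ 0) ∧
      (∀ i ∈ closedNbhdSet G A, β₁ i ≤ 0) ∧
      (∀ j ∈ A, |α₁ j| ≤ 1) ∧ (∀ i ∈ closedNbhdSet G A, |β₁ i| ≤ 1))
    (hfeas₂ : (∀ j ∈ A, ∀ i ∈ closedNbhd G j, α₂ j + β₂ i ≤ 0) ∧
      (∀ i ∈ closedNbhdSet G A, β₂ i ≤ 0) ∧
      (∀ j ∈ A, |α₂ j| ≤ 1) ∧ (∀ i ∈ closedNbhdSet G A, |β₂ i| ≤ 1))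
    (lam : ℝ) (hlam : 0 < lam ∧ lam < 1)
    (hcomb : (∀ j ∈ A, α j = lam * α₁ j + (1 - lam) * α₂ j) ∧
      (∀ i ∈ closedNbhdSet G A, β i = lam * β₁ i + (1 - lam) * β₂ i)) :
    (∀ j ∈ A, α₁ j = α₂ j) ∧ (∀ i ∈ closedNbhdSet G A, β₁ i = β₂ i) := by
  obtain ⟨hc1, hb1, ha1, hab1⟩ := hfeas₁
  obtain ⟨hc2, hb2, ha2, hab2⟩ := hfeas₂
  obtain ⟨hlam0, hlam1⟩ := hlam
  obtain ⟨hcα, hcβ⟩ := hcomb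
  have hNSA : closedNbhdSet G S ⊆ closedNbhdSet G A := by
    intro i hi
    simp only [closedNbhdSet, mem_biUnion] at hi ⊢
    obtain ⟨j, hj, hij⟩ := hi
    exact ⟨j, hSA hj, hij⟩
  -- β equality
  have key_β : ∀ i ∈ closedNbhdSet G A, β₁ i = β i ∧ β₂ i = β i := by
    intro i hi
    by_cases hiS : i ∈ closedNbhdSet G S
    · have hβi : β i = -1 := by rw [hβ]; simp [hiS]
      have h1 : -β₁ i ≤ 1 := by have := abs_le.mp (hab1 i hi); linarith [this.1]
      have h2 : -β₂ i ≤ 1 := by have := abs_le.mp (hab2 i hi); linarith [this.1]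
      have hcomb' : (1 : ℝ) = lam * (-β₁ i) + (1 - lam) * (-β₂ i) := by
        have := hcβ i hi; rw [hβi] at this; linarith
      obtain ⟨e1, e2⟩ := convex_eq_of_le hlam0 hlam1 h1 h2 hcomb'
      constructor <;> rw [hβi] <;> linarith
    · have hβi : β i = 0 := by rw [hβ]; simp [hiS]
      have hcomb' : (0 : ℝ) = lam * β₁ i + (1 - lam) * β₂ i := by
        have := hcβ i hi; rw [hβi] at this; linarith
      obtain ⟨e1, e2⟩ := convex_eq_of_le hlam0 hlam1 (hb1 i hi) (hb2 i hi) hcomb'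
      rw [hβi]; exact ⟨e1, e2⟩
  refine ⟨?_, fun i hi => (key_β i hi).1.trans (key_β i hi).2.symm⟩
  intro j hj
  by_cases hjS : j ∈ S
  · have hαj : α j = 1 := by rw [hα]; simp [hjS]
    have h1 : α₁ j ≤ 1 := (abs_le.mp (ha1 j hj)).2
    have h2 : α₂ j ≤ 1 := (abs_le.mp (ha2 j hj)).2
    have hcomb' : (1 : ℝ) = lam * α₁ j + (1 - lam) * α₂ j := by
      have := hcα j hj; rw [hαj] at this; linarith
    obtain ⟨e1, e2⟩ := convex_eq_of_le hlam0 hlam1 h1 h2 hcomb'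
    rw [e1, e2]
  · have hjAS : j ∈ A \ S := mem_sdiff.mpr ⟨hj, hjS⟩
    obtain ⟨i, hiNj, hiNS⟩ := not_subset.mp (hext j hjAS)
    have hiNA : i ∈ closedNbhdSet G A := by
      simp only [closedNbhdSet, mem_biUnion]; exact ⟨j, hj, hiNj⟩
    have hβi : β i = 0 := by rw [hβ]; simp [hiNS]
    have hβeq := key_β i hiNA
    have hβ1 : β₁ i = 0 := by rw [hβeq.1, hβi]
    have hβ2 : β₂ i = 0 := by rw [hβeq.2, hβi]
    have h1 : α₁ j ≤ 0 := by have := hc1 j hj i hiNj; linarith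
    have h2 : α₂ j ≤ 0 := by have := hc2 j hj i hiNj; linarith
    have hαj : α j = 0 := by rw [hα]; simp [hjS]
    have hcomb' : (0 : ℝ) = lam * α₁ j + (1 - lam) * α₂ j := by
      have := hcα j hj; rw [hαj] at this; linarith
    obtain ⟨e1, e2⟩ := convex_eq_of_le hlam0 hlam1 h1 h2 hcomb'
    rw [e1, e2]
end

section
/- Let G=(V,E) be a finite simple graph and S ⊂ S' ⊆ V with |S'∖S| ≥ |N[S']∖N[S]|. Then for every x ∈ {0,1}^V, the inequality Σ_{i∈N[S']} x_i ≥ |S'| implies Σ_{i∈N[S]} x_i ≥ |S|; i.e., the feasibility cut defined by S' dominates the cut defined by S. -/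
open Finset

variable {V : Type*}

/-- The feasibility cut defined by `S'` dominates the cut defined by `S ⊂ S'`
whenever `|S' \ S| ≥ |N[S'] \ N[S]|`. -/
theorem cut_dominance [Fintype V] [DecidableEq V] (G : SimpleGraph V)
    [DecidableRel G.Adj] (S S' : Finset V) (hss : S ⊂ S')
    (hcard : (closedNbhdSet G S' \ closedNbhdSet G S).card ≤ (S' \ S).card)
    (x : V → ℤ) (hx : ∀ i, x i = 0 ∨ x i = 1)
    (h : (S'.card : ℤ) ≤ ∑ i ∈ closedNbhdSet G S', x i) :
    (S.card : ℤ) ≤ ∑ i ∈ closedNbhdSet G S, x i := by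
  have hsub : closedNbhdSet G S ⊆ closedNbhdSet G S' :=
    Finset.biUnion_subset_biUnion_of_subset_left _ hss.subset
  have hsplit : ∑ i ∈ closedNbhdSet G S, x i
      + ∑ i ∈ closedNbhdSet G S' \ closedNbhdSet G S, x i
      = ∑ i ∈ closedNbhdSet G S', x i := by rw [add_comm]; exact Finset.sum_sdiff hsub
  have hdiff : ∑ i ∈ closedNbhdSet G S' \ closedNbhdSet G S, x i
      ≤ ((closedNbhdSet G S' \ closedNbhdSet G S).card : ℤ) := by
    calc ∑ i ∈ closedNbhdSet G S' \ closedNbhdSet G S, x i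
        ≤ ∑ _i ∈ closedNbhdSet G S' \ closedNbhdSet G S, (1 : ℤ) :=
          Finset.sum_le_sum (fun i _ => by rcases hx i with h0 | h1 <;> omega)
      _ = _ := by simp
  have hScard : S'.card = S.card + (S' \ S).card := by
    rw [Finset.card_sdiff_of_subset hss.subset, Nat.add_sub_cancel' (Finset.card_le_card hss.subset)]
  have hc : ((closedNbhdSet G S' \ closedNbhdSet G S).card : ℤ) ≤ ((S' \ S).card : ℤ) := by
    exact_mod_cast hcard
  have : (S'.card : ℤ) = S.card + (S' \ S).card := by exact_mod_cast hScard
  linarith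
end

section
/- Let G=(V,E) be a finite simple graph, k ≥ 1, and let 𝒞 be a clique cover of G (a family of cliques whose union is V). If D ⊆ V contains, for each clique C ∈ 𝒞, at least min(k, |C|) vertices of C, then D is a k-defensive dominating set of G: every attack A ⊆ V with |A| = k is countered by D (assuming |V| ≥ k). -/
open Finset

variable {V : Type*}

/-- Clique-cover-based feasibility: if `D` contains at least `min(k, |C|)`
vertices of every clique in a clique cover, then `D` is a `k`-defensive
dominating set. -/
theorem clique_cover_defense [Fintype V] [DecidableEq V] (G : SimpleGraph V)
    [DecidableRel G.Adj] (k : ℕ) (hk : 1 ≤ k) (𝒞 : Finset (Finset V))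
    (hclique : ∀ C ∈ 𝒞, G.IsClique ↑C) (hcover : ∀ v : V, ∃ C ∈ 𝒞, v ∈ C)
    (D : Finset V) (hD : ∀ C ∈ 𝒞, min k C.card ≤ (C ∩ D).card)
    (hV : k ≤ Fintype.card V) (A : Finset V) (hA : A.card = k) :
    Counters G D A := by
  classical
  choose g hg1 hg2 using hcover
  have hall : ∀ (s : Finset {x // x ∈ A}),
      s.card ≤ (s.biUnion (fun a => D ∩ closedNbhd G a.val)).card := by
    intro s
    set S : Finset V := s.image Subtype.val with hS
    have hScard : S.card = s.card := Finset.card_image_of_injective _ Subtype.val_injective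
    have hSsub : S ⊆ A := by
      intro x hx
      rw [hS, Finset.mem_image] at hx
      obtain ⟨⟨y, hy⟩, _, rfl⟩ := hx
      exact hy
    have hbi : S.biUnion (fun a => D ∩ closedNbhd G a)
        = s.biUnion (fun a => D ∩ closedNbhd G a.val) := by
      rw [hS, Finset.image_biUnion]
    rw [← hbi, ← hScard]
    have key : ∀ a ∈ S, ∀ d ∈ D ∩ g a,
        d ∈ S.biUnion (fun a => D ∩ closedNbhd G a) := by
      intro a ha d hd
      rw [Finset.mem_inter] at hd
      refine Finset.mem_biUnion.2 ⟨a, ha, Finset.mem_inter.2 ⟨hd.1, ?_⟩⟩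
      unfold closedNbhd
      by_cases hda : d = a
      · simp [hda]
      · refine Finset.mem_insert.2 (Or.inr ?_)
        rw [SimpleGraph.mem_neighborFinset]
        exact (hclique _ (hg1 a)) (Finset.mem_coe.2 (hg2 a)) (Finset.mem_coe.2 hd.2)
          (fun h => hda h.symm)
    by_cases hcase : ∃ a ∈ S, k ≤ (g a).card
    · obtain ⟨a, haS, hka⟩ := hcase
      have h1 : D ∩ g a ⊆ S.biUnion (fun a => D ∩ closedNbhd G a) :=
        fun d hd => key a haS d hd
      calc S.card ≤ A.card := Finset.card_le_card hSsub
        _ = k := hA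
        _ = min k (g a).card := (min_eq_left hka).symm
        _ ≤ ((g a) ∩ D).card := hD _ (hg1 a)
        _ = (D ∩ g a).card := by rw [Finset.inter_comm]
        _ ≤ _ := Finset.card_le_card h1
    · push_neg at hcase
      refine Finset.card_le_card (fun a haS => ?_)
      apply key a haS
      refine Finset.mem_inter.2 ⟨?_, hg2 a⟩
      have hlt := hcase a haS
      have hle : (g a).card ≤ ((g a) ∩ D).card := by
        have h := hD _ (hg1 a)
        rwa [min_eq_right (le_of_lt hlt)] at h
      have heq : (g a) ∩ D = g a :=
        Finset.eq_of_subset_of_card_le Finset.inter_subset_left hle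
      have : a ∈ (g a) ∩ D := by rw [heq]; exact hg2 a
      exact (Finset.mem_inter.1 this).2
  obtain ⟨f', hf'inj, hf'mem⟩ :=
    (Finset.all_card_le_biUnion_card_iff_exists_injective
      (fun a : {x // x ∈ A} => D ∩ closedNbhd G a.val)).1 hall
  refine ⟨fun v => if h : v ∈ A then f' ⟨v, h⟩ else v, ?_, ?_⟩
  · intro x hx y hy hxy
    simp only [Finset.mem_coe] at hx hy
    simp only [dif_pos hx, dif_pos hy] at hxy
    exact congrArg Subtype.val (hf'inj hxy)
  · intro a ha
    simp only [dif_pos ha]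
    have := hf'mem ⟨a, ha⟩
    rw [Finset.mem_inter] at this
    exact this
end

section
/- Let G=(V,E) be a finite simple graph, D ⊆ V, x its indicator vector, and A an attack that D cannot counter, witnessed by a Hall violator S ⊆ A. Then the Benders feasibility cut Σ_{i∈N[S]} x'_i ≥ |S| is violated by x (i.e., Σ_{i∈N[S]} x_i < |S|), yet it is a valid inequality: every indicator vector x' of a k-defensive dominating set D' (with |S| ≤ k ≤ |V|) satisfies Σ_{i∈N[S]} x'_i ≥ |S|. -/
open Finset

variable {V : Type*}

/-- The Benders feasibility cut `∑_{i ∈ N[S]} x'_i ≥ |S|` induced by a Hall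
violator `S ⊆ A` is violated by the indicator of `D`, yet valid for the
indicator of every `k`-defensive dominating set. -/
theorem benders_cut_valid [Fintype V] [DecidableEq V] (G : SimpleGraph V)
    [DecidableRel G.Adj] (D : Finset V) (k : ℕ) (A S : Finset V) (hSA : S ⊆ A)
    (hSk : S.card ≤ k) (hV : k ≤ Fintype.card V)
    (hviol : (closedNbhdSet G S ∩ D).card < S.card) :
    (∑ i ∈ closedNbhdSet G S, (if i ∈ D then (1 : ℤ) else 0)) < (S.card : ℤ) ∧
    ∀ D' : Finset V, (∀ A' : Finset V, A'.card = k → Counters G D' A') →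
      (S.card : ℤ) ≤ ∑ i ∈ closedNbhdSet G S, (if i ∈ D' then (1 : ℤ) else 0) := by
  have hsum : ∀ T : Finset V, (∑ i ∈ closedNbhdSet G S, (if i ∈ T then (1 : ℤ) else 0))
      = ((closedNbhdSet G S ∩ T).card : ℤ) := by
    intro T
    rw [Finset.sum_ite_mem, Finset.sum_const, nsmul_eq_mul, mul_one]
  constructor
  · rw [hsum]; exact_mod_cast hviol
  · intro D' hdef
    rw [hsum]
    have : S.card ≤ (closedNbhdSet G S ∩ D').card := by
      obtain ⟨A', hSA', hA'univ, hA'card⟩ :=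
        Finset.exists_subsuperset_card_eq (Finset.subset_univ S)
          hSk (by simpa using hV)
      obtain ⟨f, hinj, hf⟩ := hdef A' hA'card
      have himg : S.image f ⊆ closedNbhdSet G S ∩ D' := by
        intro y hy
        obtain ⟨a, ha, rfl⟩ := Finset.mem_image.mp hy
        refine Finset.mem_inter.mpr ⟨?_, (hf a (hSA' ha)).1⟩
        exact Finset.mem_biUnion.mpr ⟨a, ha, (hf a (hSA' ha)).2⟩
      calc S.card = (S.image f).card :=
            (Finset.card_image_of_injOn (hinj.mono (by exact_mod_cast hSA'))).symm
        _ ≤ _ := Finset.card_le_card himg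
    exact_mod_cast this
end

section
/- Let G=(V,E) be a finite simple graph and G² the square of G (same vertex set; u and v adjacent in G² iff they are adjacent in G or have a common neighbor). If D ⊆ V counters every attack A of size at most k such that the induced subgraph G²[A] is connected, then D counters every attack of size at most k. -/
/-!
Split an attack into its connected components in `G²`. Vertices in different components are
at distance at least 3 in `G`, so their closed neighborhoods are disjoint, and defender
assignments for the components glue to an injective one for the whole attack.
-/

open Finset

variable {V : Type*}

/-- The square of a graph: vertices at distance at most 2 are adjacent. -/
def graphSquare (G : SimpleGraph V) : SimpleGraph V where
  Adj u v := u ≠ v ∧ (G.Adj u v ∨ ∃ w, G.Adj u w ∧ G.Adj w v)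
  symm := by
    constructor
    rintro u v ⟨hne, h | ⟨w, hw1, hw2⟩⟩
    · exact ⟨hne.symm, Or.inl h.symm⟩
    · exact ⟨hne.symm, Or.inr ⟨w, hw2.symm, hw1.symm⟩⟩
  loopless := by constructor; rintro v ⟨hne, -⟩; exact hne rfl

namespace SimpleGraph

lemma exists_ssubset_forall_not_adj_of_not_connected_induce [DecidableEq V] {H : SimpleGraph V}
    {A : Finset V} (hA : A.Nonempty) (hH : ¬ (H.induce (A : Set V)).Connected) :
    ∃ C ⊂ A, C.Nonempty ∧ ∀ u ∈ C, ∀ v ∈ A \ C, ¬ H.Adj u v := by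
  classical
  have : Nonempty (A : Set V) := hA.coe_sort
  obtain ⟨x, y, hxy⟩ : ∃ x y, ¬ (H.induce (A : Set V)).Reachable x y := by
    by_contra! h
    exact hH ((connected_iff _).2 ⟨h, this⟩)
  refine ⟨{v ∈ A | ∃ hv : v ∈ A, (H.induce (A : Set V)).Reachable x ⟨v, hv⟩},
    (ssubset_iff_of_subset (filter_subset _ _)).2 ⟨y, y.2, ?_⟩, ⟨x, ?_⟩, ?_⟩
  · intro hy
    exact hxy (mem_filter.1 hy).2.2
  · exact mem_filter.2 ⟨x.2, x.2, .rfl⟩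
  · rintro u hu v hv huv
    obtain ⟨-, hu, hxu⟩ := mem_filter.1 hu
    obtain ⟨hv, hvC⟩ := mem_sdiff.1 hv
    exact hvC (mem_filter.2 ⟨hv, hv, hxu.trans (Adj.reachable huv)⟩)

end SimpleGraph

section Counters

variable [Fintype V] [DecidableEq V] {G : SimpleGraph V} [DecidableRel G.Adj]

lemma mem_closedNbhd_self (v : V) : v ∈ closedNbhd G v := mem_insert_self _ _

lemma subset_closedNbhdSet (S : Finset V) : S ⊆ closedNbhdSet G S :=
  fun v hv => mem_biUnion.2 ⟨v, hv, mem_closedNbhd_self v⟩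

lemma graphSquare_adj_of_mem_closedNbhd {u v d : V} (huv : u ≠ v) (hu : d ∈ closedNbhd G u)
    (hv : d ∈ closedNbhd G v) : (graphSquare G).Adj u v := by
  refine ⟨huv, ?_⟩
  simp only [closedNbhd, mem_insert, SimpleGraph.mem_neighborFinset] at hu hv
  rcases hu with rfl | hud <;> rcases hv with rfl | hvd
  · exact absurd rfl huv
  · exact .inl hvd.symm
  · exact .inl hud
  · exact .inr ⟨d, hud, hvd.symm⟩

lemma disjoint_closedNbhdSet_of_forall_not_adj {B C : Finset V} (hBC : Disjoint B C)
    (hadj : ∀ u ∈ B, ∀ v ∈ C, ¬ (graphSquare G).Adj u v) :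
    Disjoint (closedNbhdSet G B) (closedNbhdSet G C) := by
  refine disjoint_left.2 fun d hdB hdC => ?_
  obtain ⟨u, hu, hdu⟩ := mem_biUnion.1 hdB
  obtain ⟨v, hv, hdv⟩ := mem_biUnion.1 hdC
  have huv : u ≠ v := fun h => disjoint_left.1 hBC hu (h ▸ hv)
  exact hadj u hu v hv (graphSquare_adj_of_mem_closedNbhd huv hdu hdv)

lemma counters_empty (D : Finset V) : Counters G D ∅ :=
  ⟨id, by simp, by simp⟩

lemma Counters.union {D B C : Finset V} (hB : Counters G D B) (hC : Counters G D C)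
    (hBC : Disjoint (closedNbhdSet G B) (closedNbhdSet G C)) : Counters G D (B ∪ C) := by
  obtain ⟨f, hf_inj, hf⟩ := hB
  obtain ⟨g, hg_inj, hg⟩ := hC
  have hdisj : Disjoint B C := hBC.mono (subset_closedNbhdSet B) (subset_closedNbhdSet C)
  have hf_eq : ∀ a ∈ B, B.piecewise f g a = f a := fun a ha => piecewise_eq_of_mem _ _ _ ha
  have hg_eq : ∀ a ∈ C, B.piecewise f g a = g a :=
    fun a ha => piecewise_eq_of_notMem _ _ _ (disjoint_right.1 hdisj ha)
  refine ⟨B.piecewise f g, ?_, ?_⟩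
  · rw [coe_union, Set.injOn_union (disjoint_coe.2 hdisj)]
    refine ⟨hf_inj.congr fun a ha => (hf_eq a ha).symm,
      hg_inj.congr fun a ha => (hg_eq a ha).symm, fun a ha b hb hab => ?_⟩
    rw [hf_eq a ha, hg_eq b hb] at hab
    exact disjoint_left.1 hBC (mem_biUnion.2 ⟨a, ha, (hf a ha).2⟩)
      (hab ▸ mem_biUnion.2 ⟨b, hb, (hg b hb).2⟩)
  · intro a ha
    rcases mem_union.1 ha with ha | ha
    · exact hf_eq a ha ▸ hf a ha
    · exact hg_eq a ha ▸ hg a ha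

end Counters

/-- If `D` counters every attack of size at most `k` that is connected in `G²`,
then `D` counters every attack of size at most `k`. -/
theorem connected_attacks_suffice [Fintype V] [DecidableEq V]
    (G : SimpleGraph V) [DecidableRel G.Adj] (k : ℕ) (D : Finset V)
    (hD : ∀ A : Finset V, A.card ≤ k →
      ((graphSquare G).induce (↑A : Set V)).Connected → Counters G D A)
    (A : Finset V) (hA : A.card ≤ k) :
    Counters G D A := by
  induction A using Finset.strongInduction with
  | H A ih =>
    rcases A.eq_empty_or_nonempty with rfl | hne
    · exact counters_empty D
    by_cases hconn : ((graphSquare G).induce (↑A : Set V)).Connected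
    · exact hD A hA hconn
    obtain ⟨C, hCA, hC, hsep⟩ :=
      SimpleGraph.exists_ssubset_forall_not_adj_of_not_connected_induce hne hconn
    have hrest : A \ C ⊂ A := sdiff_ssubset hCA.subset hC
    have hcounters := (ih C hCA ((card_le_card hCA.subset).trans hA)).union
      (ih _ hrest ((card_le_card hrest.subset).trans hA))
      (disjoint_closedNbhdSet_of_forall_not_adj disjoint_sdiff hsep)
    rwa [union_sdiff_of_subset hCA.subset] at hcounters
end
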